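/- Let G be an n-player Büchi game on a possibly infinite arena, where player i's objective is Büchi(T_i) for a set T_i ⊆ V, and let σ' be a Nash equilibrium from a vertex v_0 such that some vertex occurs infinitely often in out(σ', v_0). Then there exists a Nash equilibrium σ from v_0 in which every strategy is finite-memory and such that Sat(out(σ, v_0)) = Sat(out(σ', v_0)). Moreover, if the arena is finite, the strategies of σ can be taken with memory size at most |V| + n² + n. -/

import Mathlib

open scoped ENNReal Classical

/-- An `n`-player arena on a (possibly infinite) directed graph: an edge relation
with no deadlocks, together with an assignment of each vertex to its owner. -/
structure Arena (V : Type) (n : ℕ) where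
  E : V → V → Prop
  owner : V → Fin n
  no_deadlock : ∀ v, ∃ v', E v v'

namespace Arena

variable {V : Type} {n : ℕ}

/-- A play: an infinite sequence of vertices following edges. -/
def IsPlay (A : Arena V n) (π : ℕ → V) : Prop := ∀ j, A.E (π j) (π (j + 1))

/-- A strategy: given the past history (the earlier vertices, oldest first) and the
current vertex, pick an `E`-successor of the current vertex. -/
structure Strategy (A : Arena V n) where
  next : List V → V → V
  valid : ∀ h v, A.E v (next h v)

/-- The list of the first `j` vertices of a play. -/
def pref (π : ℕ → V) (j : ℕ) : List V := (List.range j).map π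

/-- A play is consistent with the strategy `σ` used by player `i`. -/
def Consistent (A : Arena V n) (i : Fin n) (σ : A.Strategy) (π : ℕ → V) : Prop :=
  ∀ j, A.owner (π j) = i → π (j + 1) = σ.next (pref π j) (π j)

/-- A memoryless strategy only depends on the current vertex. -/
def Memoryless {A : Arena V n} (σ : A.Strategy) : Prop :=
  ∀ h h' v, σ.next h v = σ.next h' v

def outcomeAux (A : Arena V n) (σ : Fin n → A.Strategy) (v0 : V) : ℕ → List V × V
  | 0 => ([], v0)
  | j + 1 =>
      let p := outcomeAux A σ v0 j
      (p.1 ++ [p.2], (σ (A.owner p.2)).next p.1 p.2)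

/-- The outcome of the strategy profile `σ` from `v0`: the unique play from `v0`
consistent with every strategy of the profile. -/
def outcome (A : Arena V n) (σ : Fin n → A.Strategy) (v0 : V) (j : ℕ) : V :=
  (outcomeAux A σ v0 j).2

/-- Reachability objective: visit `T`. -/
def ReachObj (T : Set V) : Set (ℕ → V) := {π | ∃ j, π j ∈ T}

/-- Safety objective: never visit `T`. -/
def SafeObj (T : Set V) : Set (ℕ → V) := {π | ∀ j, π j ∉ T}

/-- Büchi objective: visit `T` infinitely often. -/
def BuchiObj (T : Set V) : Set (ℕ → V) := {π | ∀ j, ∃ k, j ≤ k ∧ π k ∈ T}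

/-- co-Büchi objective: visit `T` only finitely often. -/
def CoBuchiObj (T : Set V) : Set (ℕ → V) := {π | ∃ j, ∀ k, j ≤ k → π k ∉ T}

/-- Shortest-path cost of a play: the total weight up to the first visit of `T`,
and `⊤` if `T` is never visited. -/
noncomputable def spCost (w : V → V → ℕ) (T : Set V) (π : ℕ → V) : ℝ≥0∞ :=
  if ∃ k, π k ∈ T then
    (Finset.range (sInf {k | π k ∈ T})).sum fun j => (w (π j) (π (j + 1)) : ℝ≥0∞)
  else ⊤

/-- Winning region of player `p` (whose objective is `Ω`) in a two-player game:
vertices from which `p` has a strategy all of whose consistent plays lie in `Ω`. -/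
def WinRegion (A : Arena V 2) (p : Fin 2) (Ω : Set (ℕ → V)) : Set V :=
  {v | ∃ σ : A.Strategy, ∀ π, A.IsPlay π → π 0 = v → A.Consistent p σ π → π ∈ Ω}

/-- Lower value `inf_{σ₁} sup_{σ₂}` of a two-player zero-sum game with cost `c`
(minimised by player 1, maximised by player 2). -/
noncomputable def valIS (A : Arena V 2) (c : (ℕ → V) → ℝ≥0∞) (v : V) : ℝ≥0∞ :=
  ⨅ σ1 : A.Strategy, ⨆ σ2 : A.Strategy, c (outcome A ![σ1, σ2] v)

/-- Upper value `sup_{σ₂} inf_{σ₁}`. -/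
noncomputable def valSI (A : Arena V 2) (c : (ℕ → V) → ℝ≥0∞) (v : V) : ℝ≥0∞ :=
  ⨆ σ2 : A.Strategy, ⨅ σ1 : A.Strategy, c (outcome A ![σ1, σ2] v)

/-- Nash equilibrium from `v0` for cost functions (each player minimises):
no unilateral deviation decreases the deviator's cost. -/
def IsNECost (A : Arena V n) (cost : Fin n → (ℕ → V) → ℝ≥0∞)
    (σ : Fin n → A.Strategy) (v0 : V) : Prop :=
  ∀ (i : Fin n) (τ : A.Strategy),
    cost i (outcome A σ v0) ≤ cost i (outcome A (Function.update σ i τ) v0)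

/-- Nash equilibrium from `v0` for objectives: if a unilateral deviation of player `i`
satisfies `Ω i`, then so does the equilibrium outcome. -/
def IsNEObj (A : Arena V n) (Ω : Fin n → Set (ℕ → V))
    (σ : Fin n → A.Strategy) (v0 : V) : Prop :=
  ∀ (i : Fin n) (τ : A.Strategy),
    outcome A (Function.update σ i τ) v0 ∈ Ω i → outcome A σ v0 ∈ Ω i

/-- The coalition arena of player `i`: player `i` (as player `0`) against all others. -/
def coalition (A : Arena V n) (i : Fin n) : Arena V 2 where
  E := A.E
  owner := fun v => if A.owner v = i then 0 else 1
  no_deadlock := A.no_deadlock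

/-- Winning region of player `i` in their coalition game for objective `Ω`. -/
def coalWin (A : Arena V n) (i : Fin n) (Ω : Set (ℕ → V)) : Set V :=
  WinRegion (coalition A i) 0 Ω

/-- Value of a vertex in player `i`'s coalition game with cost `c`. -/
noncomputable def coalVal (A : Arena V n) (i : Fin n) (c : (ℕ → V) → ℝ≥0∞) (v : V) :
    ℝ≥0∞ :=
  valIS (coalition A i) c v

/-- Players whose reachability objective is satisfied by `π`. -/
def satReach (T : Fin n → Set V) (π : ℕ → V) : Set (Fin n) := {i | ∃ j, π j ∈ T i}

/-- Players whose safety objective is satisfied by `π`. -/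
def satSafe (T : Fin n → Set V) (π : ℕ → V) : Set (Fin n) := {i | ∀ j, π j ∉ T i}

/-- Players whose Büchi objective is satisfied by `π`. -/
def satBuchi (T : Fin n → Set V) (π : ℕ → V) : Set (Fin n) :=
  {i | ∀ j, ∃ k, j ≤ k ∧ π k ∈ T i}

/-- Players whose co-Büchi objective is satisfied by `π`. -/
def satCoBuchi (T : Fin n → Set V) (π : ℕ → V) : Set (Fin n) :=
  {i | ∃ j, ∀ k, j ≤ k → π k ∉ T i}

/-- Earliest positions at which the targets visited by `π` are first visited. -/
def visitSet (T : Fin n → Set V) (π : ℕ → V) : Set ℕ :=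
  {m | ∃ i, (∃ j, π j ∈ T i) ∧ m = sInf {j | π j ∈ T i}}

/-- A Mealy machine with memory states `M`. -/
structure Mealy (A : Arena V n) (M : Type) where
  init : M
  up : M → V → M
  nxt : M → V → V
  valid : ∀ m v, A.E v (nxt m v)

/-- The strategy `σ` is induced by the Mealy machine `mm`. -/
def InducedBy {A : Arena V n} {M : Type} (σ : A.Strategy) (mm : Mealy A M) : Prop :=
  ∀ h v, σ.next h v = mm.nxt (h.foldl mm.up mm.init) v

/-- `σ` has memory size at most `b`. -/
def HasMemorySize {A : Arena V n} (σ : A.Strategy) (b : ℕ) : Prop :=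
  ∃ (M : Type) (mm : Mealy A M), Finite M ∧ Nat.card M ≤ b ∧ InducedBy σ mm

/-- `σ` is a finite-memory strategy. -/
def FiniteMemory {A : Arena V n} (σ : A.Strategy) : Prop :=
  ∃ (M : Type) (mm : Mealy A M), Finite M ∧ InducedBy σ mm

/-- The (finite) segment of `π` between positions `a` and `b` is a simple history. -/
def SimpleSeg (π : ℕ → V) (a b : ℕ) : Prop :=
  ∀ m m', a ≤ m → m ≤ b → a ≤ m' → m' ≤ b → π m = π m' → m = m'

/-- The suffix of `π` from position `a` is a simple play. -/
def SimplePlaySeg (π : ℕ → V) (a : ℕ) : Prop :=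
  ∀ m m', a ≤ m → a ≤ m' → π m = π m' → m = m'

/-- The suffix of `π` from position `a` is a simple lasso `p c^ω` with `p c`
a simple history. -/
def SimpleLassoSeg (π : ℕ → V) (a : ℕ) : Prop :=
  ∃ k ℓ, 0 < ℓ ∧ (∀ m, a + k ≤ m → π (m + ℓ) = π m) ∧
    ∀ m m', a ≤ m → m < a + k + ℓ → a ≤ m' → m' < a + k + ℓ → π m = π m' → m = m'

/-- The segment of `π` between positions `a` and `b` is a simple cycle. -/
def SimpleCycleSeg (π : ℕ → V) (a b : ℕ) : Prop :=
  a < b ∧ π b = π a ∧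
    ∀ m m', a ≤ m → m < b → a ≤ m' → m' < b → π m = π m' → m = m'

/-- Total weight of a history (a list of vertices). -/
def histWeight (w : V → V → ℕ) : List V → ℕ
  | [] => 0
  | [_] => 0
  | a :: b :: t => w a b + histWeight w (b :: t)

/-- The list of vertices along positions `a..b` (inclusive) of a play. -/
def segList (π : ℕ → V) (a b : ℕ) : List V :=
  (List.range (b - a + 1)).map fun m => π (a + m)

/-- The segment of `π` between positions `a` and `b` has minimal weight among all
histories that share its first and last vertex and traverse only its vertices. -/
def MinWeightSeg (A : Arena V n) (w : V → V → ℕ) (π : ℕ → V) (a b : ℕ) : Prop :=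
  ∀ h : List V, h ≠ [] → List.Chain' A.E h →
    h.head? = some (π a) → h.getLast? = some (π b) →
    (∀ x ∈ h, ∃ m, a ≤ m ∧ m ≤ b ∧ π m = x) →
    histWeight w (segList π a b) ≤ histWeight w h

/-- Given cut positions `p`, segments number `l` and `l'` of `π` carry the same
vertex sequence. -/
def SegEq (π : ℕ → V) (p : ℕ → ℕ) (l l' : ℕ) : Prop :=
  p (l' + 1) - p l' = p (l + 1) - p l ∧
    ∀ m, m ≤ p (l + 1) - p l → π (p l' + m) = π (p l + m)

/-- There is no cycle of the arena using only vertices of `S` and avoiding `avoid`. -/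
def NoCycleAvoid (A : Arena V n) (S : Set V) (avoid : V) : Prop :=
  ¬ ∃ (m : ℕ) (c : ℕ → V), 0 < m ∧ (∀ j, j < m → A.E (c j) (c (j + 1))) ∧
      c m = c 0 ∧ ∀ j, j ≤ m → c j ∈ S ∧ c j ≠ avoid

end Arena

open Arena

/-!
The equilibrium outcome eventually avoids the targets of the losers and still revisits some
vertex `v*`. Between two later visits of `v*` we pick visits of the winners' targets, one player
after the other. This gives a lasso from `v0`: a simple path followed by a cycle cut into `n`
windows, each starting at a target of a winner, with no loser's target on the cycle. All players
follow the lasso with one Mealy machine. Its state is the position on the simple prefix, or the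
current window with the owner of the last vertex (the one to blame for a deviation), or the
player being punished: `|V| + n² + n` states.

A loser `i` who leaves the lasso is punished positionally, with ranks from the nested fixpoint
`μX. νY. (T ∩ cpre X) ∪ (Tᶜ ∩ cpre Y)` of the opponents' co-Büchi game (ordinal ranks, so infinite
arenas are covered). The deviation can only lead into this fixpoint. Outside it, the ranks of the
dual fixpoint give `i` a positional way to visit `T i` infinitely often against anything. Then
`i` could deviate profitably from the original equilibrium at the same point.
-/

section Sequences

theorem exists_injOn_walk {α : Type*} (r : α → α → Prop) (len : ℕ) (w : ℕ → α)
    (hw : ∀ q < len, r (w q) (w (q + 1))) :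
    ∃ (b : ℕ) (p : ℕ → α), p 0 = w 0 ∧ p b = w len ∧ (∀ q < b, r (p q) (p (q + 1))) ∧
      (∀ q ≤ b, ∃ m, p q = w m) ∧ Set.InjOn p (Set.Iic b) := by
  induction len using Nat.strong_induction_on generalizing w with
  | _ len ih =>
    by_cases hdup : ∃ q q', q < q' ∧ q' ≤ len ∧ w q = w q'
    · obtain ⟨q, q', hqq', hq'len, heq⟩ := hdup
      set w' : ℕ → α := fun t => if t ≤ q then w t else w (t + (q' - q)) with hw'
      have hedge : ∀ t < len - (q' - q), r (w' t) (w' (t + 1)) := by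
        intro t ht
        rcases lt_trichotomy (t + 1) (q + 1) with h | h | h
        · simp only [hw', if_pos (by omega : t ≤ q), if_pos (by omega : t + 1 ≤ q)]
          exact hw t (by omega)
        · obtain rfl : t = q := by omega
          simp only [hw', le_refl, if_true, if_neg (by omega : ¬ t + 1 ≤ t),
            show t + 1 + (q' - t) = q' + 1 by omega, heq]
          exact hw q' (by omega)
        · simp only [hw', if_neg (by omega : ¬ t ≤ q), if_neg (by omega : ¬ t + 1 ≤ q),
            show t + 1 + (q' - q) = t + (q' - q) + 1 by omega]
          exact hw _ (by omega)
      obtain ⟨b, p, h0, hend, hp, hsub, hinj⟩ := ih _ (by omega) w' hedge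
      refine ⟨b, p, by simp [h0, hw'], ?_, hp, fun s hs => ?_, hinj⟩
      · rw [hend, hw']
        dsimp only
        split_ifs with h
        · rw [show len - (q' - q) = q by omega, heq]
          congr 1
          omega
        · congr 1
          omega
      · obtain ⟨m, hm⟩ := hsub s hs
        by_cases h : m ≤ q
        · exact ⟨m, by simpa [hw', if_pos h] using hm⟩
        · exact ⟨m + (q' - q), by simpa [hw', if_neg h] using hm⟩
    · push Not at hdup
      refine ⟨len, w, rfl, rfl, hw, fun q _ => ⟨q, rfl⟩, fun q hq q' hq' heq => ?_⟩
      rcases lt_trichotomy q q' with h | h | h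
      · exact absurd heq (hdup q q' h hq')
      · exact h
      · exact absurd heq.symm (hdup q' q h hq)

theorem exists_strictMono_of_frequently (P : ℕ → ℕ → Prop)
    (hP : ∀ k, ∃ᶠ t in Filter.atTop, P k t) (a : ℕ) :
    ∃ d : ℕ → ℕ, StrictMono d ∧ a < d 0 ∧ ∀ k, P k (d k) := by
  have hnext : ∀ k t, ∃ s, t < s ∧ P k s := fun k t =>
    (Filter.frequently_atTop.mp (hP k) (t + 1)).imp fun s hs => ⟨by omega, hs.2⟩
  choose next hlt hnext using hnext
  let d : ℕ → ℕ := fun k => Nat.rec (next 0 a) (fun k dk => next (k + 1) dk) k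
  refine ⟨d, strictMono_nat_of_lt_succ fun k => hlt _ _, hlt _ _, fun k => ?_⟩
  cases k with
  | zero => exact hnext _ _
  | succ k => exact hnext _ _

variable {α : Type*} [LinearOrder α] [WellFoundedLT α]

theorem exists_forall_ge_not_of_drops (r : ℕ → α) (P : ℕ → Prop)
    (hle : ∀ t, r (t + 1) ≤ r t) (hlt : ∀ t, P t → r (t + 1) < r t) :
    ∃ N, ∀ t ≥ N, ¬ P t := by
  obtain ⟨_, ⟨N, rfl⟩, hmin⟩ :=
    wellFounded_lt.has_min (Set.range r) ⟨r 0, 0, rfl⟩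
  refine ⟨N, fun t ht hP => hmin (r (t + 1)) ⟨t + 1, rfl⟩ ?_⟩
  exact (hlt t hP).trans_le (antitone_nat_of_succ_le hle ht)

theorem frequently_of_drops (r : ℕ → α) (P : ℕ → Prop)
    (hlt : ∀ t, ¬ P t → r (t + 1) < r t) (j : ℕ) : ∃ k ≥ j, P k := by
  by_contra! h
  have hdrop : ∀ t, r (j + t + 1) < r (j + t) := fun t => hlt _ (h _ (by omega))
  obtain ⟨N, hN⟩ := exists_forall_ge_not_of_drops (fun t => r (j + t)) (fun _ => True)
    (fun t => (hdrop t).le) (fun t _ => hdrop t)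
  exact hN N le_rfl trivial

end Sequences

section Stage

open OrderHom OrdinalApprox

variable {α : Type*} (f : Set α →o Set α)

noncomputable def lfpStage (x : α) : Ordinal := sInf {b | x ∈ f (lfpApprox f ⊥ b)}

theorem mem_map_lfpApprox_lfpStage {x : α} (hx : x ∈ lfp f) :
    x ∈ f (lfpApprox f ⊥ (lfpStage f x)) := by
  have hne : {b | x ∈ f (lfpApprox f ⊥ b)}.Nonempty := by
    refine ⟨(Order.succ (Cardinal.mk (Set α))).ord, ?_⟩
    show x ∈ f (lfpApprox f ⊥ _)
    rwa [lfpApprox_ord_eq_lfp, map_lfp]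
  exact csInf_mem hne

theorem lfpStage_le {x : α} {b : Ordinal} (hx : x ∈ f (lfpApprox f ⊥ b)) :
    lfpStage f x ≤ b :=
  csInf_le' hx

theorem mem_lfp_of_mem_map_lfpApprox {x : α} {b : Ordinal} (hx : x ∈ f (lfpApprox f ⊥ b)) :
    x ∈ lfp f := by
  rw [← map_lfp]
  exact f.monotone (lfpApprox_le_of_mem_fixedPoints _ (map_lfp f) bot_le b) hx

theorem exists_lt_of_mem_lfpApprox {x : α} {b : Ordinal} (hx : x ∈ lfpApprox f ⊥ b) :
    ∃ b' < b, x ∈ f (lfpApprox f ⊥ b') := by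
  rw [lfpApprox] at hx
  simpa only [Set.bot_eq_empty, Set.sup_eq_union, Set.iSup_eq_iUnion, Set.mem_union,
    Set.mem_iUnion, Set.mem_empty_iff_false, false_or, exists_prop] using hx

theorem lfpStage_lt {x : α} {b : Ordinal} (hx : x ∈ lfpApprox f ⊥ b) :
    x ∈ lfp f ∧ lfpStage f x < b := by
  obtain ⟨b', hb', hx'⟩ := exists_lt_of_mem_lfpApprox f hx
  exact ⟨mem_lfp_of_mem_map_lfpApprox f hx', (lfpStage_le f hx').trans_lt hb'⟩

end Stage

namespace Arena

variable {V : Type} {n : ℕ}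

theorem pref_succ (π : ℕ → V) (j : ℕ) : pref π (j + 1) = pref π j ++ [π j] := by
  simp [pref, List.range_succ]

@[simp]
theorem length_pref (π : ℕ → V) (t : ℕ) : (pref π t).length = t := by
  simp [pref]

theorem pref_congr {π π' : ℕ → V} {t : ℕ} (h : ∀ u < t, π u = π' u) :
    pref π t = pref π' t :=
  List.map_congr_left fun u hu => h u (List.mem_range.mp hu)

theorem outcomeAux_eq (A : Arena V n) (σ : Fin n → A.Strategy) (v0 : V) (t : ℕ) :
    outcomeAux A σ v0 t = (pref (outcome A σ v0) t, outcome A σ v0 t) := by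
  induction t with
  | zero => rfl
  | succ t ih =>
    refine Prod.ext ?_ rfl
    show (outcomeAux A σ v0 t).1 ++ [(outcomeAux A σ v0 t).2] = _
    rw [ih, pref_succ]

theorem outcome_succ (A : Arena V n) (σ : Fin n → A.Strategy) (v0 : V) (t : ℕ) :
    outcome A σ v0 (t + 1) =
      (σ (A.owner (outcome A σ v0 t))).next (pref (outcome A σ v0) t) (outcome A σ v0 t) := by
  show (outcomeAux A σ v0 (t + 1)).2 = _
  simp only [outcomeAux, outcomeAux_eq]

theorem isPlay_outcome (A : Arena V n) (σ : Fin n → A.Strategy) (v0 : V) :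
    A.IsPlay (outcome A σ v0) := fun j => by
  rw [outcome_succ]
  exact (σ _).valid _ _

theorem HasMemorySize.finiteMemory {A : Arena V n} {σ : A.Strategy} {b : ℕ}
    (h : HasMemorySize σ b) : FiniteMemory σ :=
  let ⟨M, mm, hM, _, hσ⟩ := h
  ⟨M, mm, hM, hσ⟩

theorem HasMemorySize.mono {A : Arena V n} {σ : A.Strategy} {b b' : ℕ}
    (h : HasMemorySize σ b) (hb : b ≤ b') : HasMemorySize σ b' :=
  let ⟨M, mm, hM, hcard, hσ⟩ := h
  ⟨M, mm, hM, hcard.trans hb, hσ⟩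

theorem IsPlay.comp_mod {A : Arena V n} {π : ℕ → V} (hπ : A.IsPlay π) {a L : ℕ} (hL : 0 < L)
    (hper : π (a + L) = π a) : A.IsPlay fun q => π (a + q % L) := by
  intro q
  have hdm := Nat.div_add_mod q L
  have hr := Nat.mod_lt q hL
  by_cases hlast : q % L + 1 < L
  · have h : (q + 1) % L = q % L + 1 := by
      rw [show q + 1 = (q % L + 1) + L * (q / L) by omega, Nat.add_mul_mod_self_left,
        Nat.mod_eq_of_lt hlast]
    simpa only [h, ← add_assoc] using hπ (a + q % L)
  · have h : (q + 1) % L = 0 := by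
      rw [show q + 1 = L * (q / L + 1) by rw [Nat.mul_succ]; omega, Nat.mul_mod_right]
    simpa only [h, add_zero, ← hper, show a + q % L + 1 = a + L by omega] using hπ (a + q % L)

noncomputable def select (A : Arena V n) (good : V → Set V) (v : V) : V :=
  if h : ∃ w, A.E v w ∧ w ∈ good v then h.choose else (A.no_deadlock v).choose

theorem select_edge (A : Arena V n) (good : V → Set V) (v : V) : A.E v (A.select good v) := by
  unfold select
  split_ifs with h
  exacts [h.choose_spec.1, (A.no_deadlock v).choose_spec]

theorem select_mem (A : Arena V n) {good : V → Set V} {v : V}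
    (h : ∃ w, A.E v w ∧ w ∈ good v) : A.select good v ∈ good v := by
  rw [select, dif_pos h]
  exact h.choose_spec.2

theorem outcome_update_eq_of_agree (A : Arena V n) (σ : Fin n → A.Strategy) (v0 : V)
    {i : Fin n} {τ : A.Strategy} {m : ℕ}
    (hτ : ∀ h v, h.length < m → τ.next h v = (σ i).next h v) :
    ∀ t ≤ m, outcome A (Function.update σ i τ) v0 t = outcome A σ v0 t := by
  have hagree : ∀ j h v, h.length < m →
      (Function.update σ i τ j).next h v = (σ j).next h v := by
    intro j h v hh
    by_cases hj : j = i
    · subst hj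
      simpa using hτ h v hh
    · rw [Function.update_of_ne hj]
  intro t
  induction t using Nat.strong_induction_on with
  | _ t ih =>
    intro ht
    cases t with
    | zero => rfl
    | succ t =>
      have hpref : pref (outcome A (Function.update σ i τ) v0) t = pref (outcome A σ v0) t :=
        pref_congr fun u hu => ih u (by omega) (by omega)
      rw [outcome_succ, outcome_succ, hpref, ih t (by omega) (by omega),
        hagree _ _ _ (by simp only [length_pref]; omega)]

namespace Punish

open OrderHom OrdinalApprox

variable (A : Arena V n) (i : Fin n)

def cpre (X : Set V) : Set V :=
  {v | (A.owner v ≠ i → ∃ w, A.E v w ∧ w ∈ X) ∧ (A.owner v = i → ∀ w, A.E v w → w ∈ X)}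

def apre (Y : Set V) : Set V :=
  {v | (A.owner v ≠ i → ∀ w, A.E v w → w ∈ Y) ∧ (A.owner v = i → ∃ w, A.E v w ∧ w ∈ Y)}

variable {A i} in
theorem cpre_mono {X Y : Set V} (h : X ⊆ Y) : cpre A i X ⊆ cpre A i Y :=
  fun _ hv => ⟨fun ho => (hv.1 ho).imp fun _ hw => ⟨hw.1, h hw.2⟩, fun ho w hw => h (hv.2 ho w hw)⟩

variable {A i} in
theorem apre_mono {X Y : Set V} (h : X ⊆ Y) : apre A i X ⊆ apre A i Y :=
  fun _ hv => ⟨fun ho w hw => h (hv.1 ho w hw), fun ho => (hv.2 ho).imp fun _ hw => ⟨hw.1, h hw.2⟩⟩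

theorem compl_cpre (X : Set V) : (cpre A i X)ᶜ = apre A i Xᶜ := by
  ext v
  by_cases h : A.owner v = i <;> simp [cpre, apre, h]

variable (T : Set V)

def inner (X : Set V) : Set V →o Set V :=
  ⟨fun Y => (T ∩ cpre A i X) ∪ (Tᶜ ∩ cpre A i Y),
    fun _ _ h => Set.union_subset_union_right _ (Set.inter_subset_inter_right _ (cpre_mono h))⟩

def outer : Set V →o Set V :=
  ⟨fun X => gfp (inner A i T X), fun _ _ h => gfp.monotone fun _ =>
    Set.union_subset_union_left _ (Set.inter_subset_inter_right _ (cpre_mono h))⟩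

/-- The co-Büchi winning region `μX. νY. (T ∩ cpre X) ∪ (Tᶜ ∩ cpre Y)` of the opponents of `i`. -/
def region : Set V := lfp (outer A i T)

theorem outer_eq (X : Set V) :
    outer A i T X = (T ∩ cpre A i X) ∪ (Tᶜ ∩ cpre A i (outer A i T X)) :=
  (map_gfp (inner A i T X)).symm

theorem outer_region : outer A i T (region A i T) = region A i T := map_lfp _

theorem inner_region : inner A i T (region A i T) (region A i T) = region A i T := by
  have h := map_gfp (inner A i T (region A i T))
  rwa [show gfp (inner A i T (region A i T)) = region A i T from outer_region A i T] at h

noncomputable def rank : V → Ordinal := lfpStage (outer A i T)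

/-- Where the opponents steer from `v`: the rank never increases, and drops after a visit of `T`. -/
noncomputable def punishGoal (v : V) : Set V :=
  if v ∈ T then lfpApprox (outer A i T) ⊥ (rank A i T v)
  else outer A i T (lfpApprox (outer A i T) ⊥ (rank A i T v))

variable {A i T}

theorem mem_cpre_punishGoal {v : V} (hv : v ∈ region A i T) :
    v ∈ cpre A i (punishGoal A i T v) := by
  have h := mem_map_lfpApprox_lfpStage _ hv
  rw [outer_eq] at h
  by_cases hT : v ∈ T <;> simpa [punishGoal, hT, rank] using h

theorem punishGoal_spec {v w : V} (hw : w ∈ punishGoal A i T v) :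
    w ∈ region A i T ∧ rank A i T w ≤ rank A i T v ∧ (v ∈ T → rank A i T w < rank A i T v) := by
  by_cases hT : v ∈ T
  · rw [punishGoal, if_pos hT] at hw
    obtain ⟨hreg, hlt⟩ := lfpStage_lt _ hw
    exact ⟨hreg, hlt.le, fun _ => hlt⟩
  · rw [punishGoal, if_neg hT] at hw
    exact ⟨mem_lfp_of_mem_map_lfpApprox _ hw, lfpStage_le _ hw, fun h => absurd h hT⟩

variable (A i T)

noncomputable def punisher : V → V := A.select (punishGoal A i T)

variable {A i T}

theorem punisher_sound (χ : ℕ → V) (hp : A.IsPlay χ) (h0 : χ 0 ∈ region A i T)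
    (hf : ∀ t, A.owner (χ t) ≠ i → χ (t + 1) = punisher A i T (χ t)) :
    ∃ N, ∀ t ≥ N, χ t ∉ T := by
  have hgoal : ∀ t, χ t ∈ region A i T → χ (t + 1) ∈ punishGoal A i T (χ t) := by
    intro t ht
    have hc := mem_cpre_punishGoal ht
    by_cases ho : A.owner (χ t) = i
    · exact hc.2 ho _ (hp t)
    · rw [hf t ho]
      exact A.select_mem (hc.1 ho)
  have hreg : ∀ t, χ t ∈ region A i T := fun t => by
    induction t with
    | zero => exact h0
    | succ t ih => exact (punishGoal_spec (hgoal t ih)).1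
  exact exists_forall_ge_not_of_drops (fun t => rank A i T (χ t)) (fun t => χ t ∈ T)
    (fun t => (punishGoal_spec (hgoal t (hreg t))).2.1)
    (fun t => (punishGoal_spec (hgoal t (hreg t))).2.2)

variable (A i T)

def dual : Set V →o Set V :=
  ⟨fun Z => (Tᶜ ∪ apre A i (region A i T)ᶜ) ∩ (T ∪ apre A i Z),
    fun _ _ h => Set.inter_subset_inter_right _ (Set.union_subset_union_right _ (apre_mono h))⟩

theorem dual_eq (Z : Set V) : dual A i T Z = (inner A i T (region A i T) Zᶜ)ᶜ := by
  show (Tᶜ ∪ apre A i (region A i T)ᶜ) ∩ (T ∪ apre A i Z)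
    = ((T ∩ cpre A i (region A i T)) ∪ (Tᶜ ∩ cpre A i Zᶜ))ᶜ
  rw [Set.compl_union, Set.compl_inter, Set.compl_inter, compl_cpre, compl_cpre, compl_compl,
    compl_compl]

theorem compl_region : (region A i T)ᶜ = lfp (dual A i T) := by
  refine le_antisymm (Set.compl_subset_comm.mpr ?_) (lfp_le _ ?_)
  · have hfix : inner A i T (region A i T) (lfp (dual A i T))ᶜ = (lfp (dual A i T))ᶜ := by
      rw [← compl_compl (inner A i T _ _), ← dual_eq, map_lfp]
    calc (lfp (dual A i T))ᶜ ≤ gfp (inner A i T (region A i T)) := le_gfp _ hfix.ge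
      _ = region A i T := outer_region A i T
  · rw [dual_eq, compl_compl, inner_region]

noncomputable def dualRank : V → Ordinal := lfpStage (dual A i T)

/-- Where player `i` steers from `v`: outside `T` the rank drops strictly. -/
noncomputable def evadeGoal (v : V) : Set V :=
  if v ∈ T then (region A i T)ᶜ else lfpApprox (dual A i T) ⊥ (dualRank A i T v)

variable {A i T}

theorem mem_apre_evadeGoal {v : V} (hv : v ∉ region A i T) : v ∈ apre A i (evadeGoal A i T v) := by
  have h := mem_map_lfpApprox_lfpStage (dual A i T)
    (by rw [← compl_region]; exact hv)
  by_cases hT : v ∈ T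
  · simpa [evadeGoal, hT, dualRank] using h.1
  · simpa [evadeGoal, hT, dualRank] using h.2

theorem evadeGoal_spec {v w : V} (hw : w ∈ evadeGoal A i T v) :
    w ∉ region A i T ∧ (v ∉ T → dualRank A i T w < dualRank A i T v) := by
  by_cases hT : v ∈ T
  · rw [evadeGoal, if_pos hT] at hw
    exact ⟨hw, fun h => absurd hT h⟩
  · rw [evadeGoal, if_neg hT] at hw
    obtain ⟨hlfp, hlt⟩ := lfpStage_lt _ hw
    exact ⟨by rw [← Set.mem_compl_iff, compl_region]; exact hlfp, fun _ => hlt⟩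

variable (A i T)

noncomputable def evader : V → V := A.select (evadeGoal A i T)

variable {A i T}

theorem evader_complete (χ : ℕ → V) (hp : A.IsPlay χ) (h0 : χ 0 ∉ region A i T)
    (hf : ∀ t, A.owner (χ t) = i → χ (t + 1) = evader A i T (χ t)) :
    χ ∈ BuchiObj T := by
  have hgoal : ∀ t, χ t ∉ region A i T → χ (t + 1) ∈ evadeGoal A i T (χ t) := by
    intro t ht
    have ha := mem_apre_evadeGoal ht
    by_cases ho : A.owner (χ t) = i
    · rw [hf t ho]
      exact A.select_mem (ha.2 ho)
    · exact ha.1 ho _ (hp t)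
  have hreg : ∀ t, χ t ∉ region A i T := fun t => by
    induction t with
    | zero => exact h0
    | succ t ih => exact (evadeGoal_spec (hgoal t ih)).1
  exact frequently_of_drops (fun t => dualRank A i T (χ t)) (fun t => χ t ∈ T)
    (fun t => (evadeGoal_spec (hgoal t (hreg t))).2)

end Punish

/-- Otherwise player `i` could follow the equilibrium up to position `m`, move to `u` and then
play `evader`, which visits `T i` infinitely often against any behaviour of the others. -/
theorem mem_region_of_isNEObj {A : Arena V n} {T : Fin n → Set V} {v0 : V}
    {σ : Fin n → A.Strategy} (hNE : A.IsNEObj (fun i => BuchiObj (T i)) σ v0) {i : Fin n}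
    (hi : outcome A σ v0 ∉ BuchiObj (T i)) {m : ℕ} {u : V}
    (hown : A.owner (outcome A σ v0 m) = i) (hE : A.E (outcome A σ v0 m) u) :
    u ∈ Punish.region A i (T i) := by
  by_contra hu
  let τ : A.Strategy :=
    ⟨fun h v => if h.length < m then (σ i).next h v
      else if h.length = m ∧ A.E v u then u else Punish.evader A i (T i) v, by
      intro h v
      split_ifs with h1 h2
      exacts [(σ i).valid h v, h2.2, A.select_edge _ v]⟩
  set ρ := outcome A (Function.update σ i τ) v0 with hρ
  have hagree : ρ m = outcome A σ v0 m :=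
    outcome_update_eq_of_agree A σ v0 (fun h v hh => if_pos hh) m le_rfl
  have hstep : ∀ t, A.owner (ρ t) = i → ρ (t + 1) = τ.next (pref ρ t) (ρ t) := by
    intro t ht
    rw [hρ, outcome_succ, ← hρ, ht, Function.update_self]
  have hu' : ρ (m + 1) = u := by
    rw [hstep m (hagree ▸ hown), hagree]
    simp [τ, hE]
  have hB := Punish.evader_complete (fun t => ρ (m + 1 + t))
    (fun t => isPlay_outcome A _ v0 _) (by simpa [hu'] using hu) fun t ht => by
      rw [← add_assoc, hstep _ ht]
      simp [τ, show ¬ m + 1 + t < m by omega, show m + 1 + t ≠ m by omega]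
  refine hi (hNE i τ fun j => ?_)
  obtain ⟨k, hk, hkT⟩ := hB j
  exact ⟨m + 1 + k, by omega, hkT⟩

/-- A lasso `pv 0 = v0, …, pv a = cv (c 0), …, cv (c n) = cv (c 0)` whose cycle is cut into the
windows `[c k, c (k + 1)]`, together with punishing strategies `pun i` for the losers `i ∉ S`. -/
structure LassoPlan (A : Arena V n) (T : Fin n → Set V) (S : Set (Fin n)) (v0 : V) where
  a : ℕ
  pv : ℕ → V
  cv : ℕ → V
  c : ℕ → ℕ
  pun : Fin n → V → V
  W : Fin n → Set V
  pv_zero : pv 0 = v0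
  pv_edge : ∀ ℓ < a, A.E (pv ℓ) (pv (ℓ + 1))
  pv_a : pv a = cv (c 0)
  pv_injOn : Set.InjOn pv (Set.Iic a)
  cv_edge : ∀ q, A.E (cv q) (cv (q + 1))
  cv_wrap : cv (c n) = cv (c 0)
  c_lt : ∀ k < n, c k < c (k + 1)
  cv_mem : ∀ i ∈ S, cv (c i) ∈ T i
  cv_not_mem : ∀ i ∉ S, ∀ q, cv q ∉ T i
  pun_edge : ∀ i v, A.E v (pun i v)
  pun_sound : ∀ i ∉ S, ∀ χ : ℕ → V, A.IsPlay χ → χ 0 ∈ W i →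
    (∀ t, A.owner (χ t) ≠ i → χ (t + 1) = pun i (χ t)) → ∃ N, ∀ t ≥ N, χ t ∉ T i
  mem_W : ∀ i ∉ S, ∀ v u, ((∃ ℓ ≤ a, pv ℓ = v) ∨ ∃ q, cv q = v) →
    A.owner v = i → A.E v u → u ∈ W i

namespace LassoPlan

def nextWindow (k : Fin n) : Fin n := ⟨(k + 1) % n, Nat.mod_lt _ k.pos⟩

theorem val_iterate_nextWindow (k : Fin n) (m : ℕ) : (nextWindow^[m] k).val = (k + m) % n := by
  induction m with
  | zero => exact (Nat.mod_eq_of_lt k.isLt).symm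
  | succ m ih =>
    rw [Function.iterate_succ_apply', nextWindow]
    simp only [ih, Nat.mod_add_mod, add_assoc]

variable {A : Arena V n} {T : Fin n → Set V} {S : Set (Fin n)} {v0 : V}
  (P : LassoPlan A T S v0)

theorem c_lt_c_succ (k : Fin n) : P.c k < P.c (k + 1) := P.c_lt k k.isLt

theorem cv_c_succ (k : Fin n) : P.cv (P.c (k + 1)) = P.cv (P.c (nextWindow k)) := by
  by_cases hk : k.val + 1 < n
  · rw [show (nextWindow k).val = k + 1 from Nat.mod_eq_of_lt hk]
  · have hkn : k.val + 1 = n := by omega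
    rw [show (nextWindow k).val = 0 by simp [nextWindow, hkn], hkn, P.cv_wrap]

/-- Memory states: a position on the prefix, a window together with the owner of the last
vertex, or the player being punished. -/
abbrev Mem : Type := Fin (P.a + 1) ⊕ (Fin n × Fin n) ⊕ Fin n

def InWindow (k : ℕ) (v : V) : Prop := ∃ q, P.c k ≤ q ∧ q < P.c (k + 1) ∧ P.cv q = v

noncomputable def lastPos (k : ℕ) (v : V) : ℕ :=
  Nat.findGreatest (fun q => P.c k ≤ q ∧ P.cv q = v) (P.c (k + 1) - 1)

theorem lastPos_spec {k : ℕ} {v : V} (h : P.InWindow k v) :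
    P.c k ≤ P.lastPos k v ∧ P.lastPos k v < P.c (k + 1) ∧ P.cv (P.lastPos k v) = v ∧
      ∀ q, P.c k ≤ q → q < P.c (k + 1) → P.cv q = v → q ≤ P.lastPos k v := by
  obtain ⟨q, hq1, hq2, hq3⟩ := h
  have hsp := Nat.findGreatest_spec (P := fun q => P.c k ≤ q ∧ P.cv q = v)
    (show q ≤ P.c (k + 1) - 1 by omega) ⟨hq1, hq3⟩
  have hle := Nat.findGreatest_le (P := fun q => P.c k ≤ q ∧ P.cv q = v) (P.c (k + 1) - 1)
  exact ⟨hsp.1, by unfold lastPos; omega, hsp.2,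
    fun q' h1 h2 h3 => Nat.le_findGreatest (by omega) ⟨h1, h3⟩⟩

def OnTrack : P.Mem → V → Prop
  | .inl ℓ, v => v = P.pv ℓ
  | .inr (.inl (k, _)), v => v = P.cv (P.c (k + 1)) ∨ P.InWindow k v
  | .inr (.inr _), _ => False

/-- The owner of the previous vertex (junk in the initial state). -/
def blame : P.Mem → Fin n
  | .inl ℓ => A.owner (P.pv (ℓ - 1))
  | .inr (.inl (_, j)) => j
  | .inr (.inr i) => i

/-- The move on track; inside a window it jumps past the last occurrence of the current vertex,
so that the position in the window increases. -/
noncomputable def follow : P.Mem → V → V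
  | .inl ℓ, _ => if ℓ.val < P.a then P.pv (ℓ + 1) else P.cv (P.c 0 + 1)
  | .inr (.inl (k, _)), v =>
    if v = P.cv (P.c (k + 1)) then P.cv (P.c (nextWindow k) + 1) else P.cv (P.lastPos k v + 1)
  | .inr (.inr i), v => P.pun i v

noncomputable def advance : P.Mem → V → P.Mem
  | .inl ℓ, v =>
    if h : ℓ.val < P.a then .inl ⟨ℓ + 1, by omega⟩
    else .inr (.inl (⟨0, (A.owner v).pos⟩, A.owner v))
  | .inr (.inl (k, _)), v =>
    .inr (.inl (if v = P.cv (P.c (k + 1)) then nextWindow k else k, A.owner v))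
  | .inr (.inr i), _ => .inr (.inr i)

noncomputable def nxt (m : P.Mem) (v : V) : V :=
  if P.OnTrack m v then P.follow m v else P.pun (P.blame m) v

noncomputable def up (m : P.Mem) (v : V) : P.Mem :=
  if P.OnTrack m v then P.advance m v else .inr (.inr (P.blame m))

theorem nxt_edge (m : P.Mem) (v : V) : A.E v (P.nxt m v) := by
  unfold nxt
  split_ifs with h
  · rcases m with ℓ | ⟨k, j⟩ | i
    · have hv : v = P.pv ℓ := h
      simp only [follow]
      split_ifs with hℓ
      · exact hv ▸ P.pv_edge ℓ hℓ
      · rw [hv, show ℓ.val = P.a by omega, P.pv_a]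
        exact P.cv_edge _
    · simp only [follow]
      split_ifs with hend
      · rw [hend, cv_c_succ]
        exact P.cv_edge _
      · have hw : P.InWindow k v := h.resolve_left hend
        simpa only [(P.lastPos_spec hw).2.2.1] using P.cv_edge (P.lastPos k v)
    · exact P.pun_edge i v
  · exact P.pun_edge _ v

theorem onTrack_window_start (k j : Fin n) :
    P.OnTrack (.inr (.inl (k, j))) (P.cv (P.c k + 1)) := by
  by_cases h : P.c k + 1 < P.c (k + 1)
  · exact .inr ⟨_, by omega, h, rfl⟩
  · exact .inl (by rw [show P.c k + 1 = P.c (k + 1) by have := P.c_lt_c_succ k; omega])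

theorem onTrack_up_nxt {m : P.Mem} {v : V} (h : P.OnTrack m v) :
    P.OnTrack (P.up m v) (P.nxt m v) := by
  simp only [up, nxt, if_pos h]
  rcases m with ℓ | ⟨k, j⟩ | i
  · simp only [advance, follow]
    split_ifs with hℓ
    · rfl
    · exact P.onTrack_window_start _ _
  · simp only [advance, follow]
    split_ifs with hend
    · exact P.onTrack_window_start _ _
    · obtain ⟨hle, hlt, -, -⟩ := P.lastPos_spec (h.resolve_left hend)
      rcases (show P.lastPos k v + 1 ≤ P.c (k + 1) by omega).lt_or_eq with h' | h'
      · exact .inr ⟨_, by omega, h', rfl⟩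
      · exact .inl (by rw [h'])
  · exact h.elim

theorem blame_up {m : P.Mem} {v : V} (h : P.OnTrack m v) : P.blame (P.up m v) = A.owner v := by
  simp only [up, if_pos h]
  rcases m with ℓ | ⟨k, j⟩ | i
  · have hv : v = P.pv ℓ := h
    simp only [advance]
    split_ifs
    · simp [blame, hv]
    · rfl
  · rfl
  · exact h.elim

theorem up_of_not_onTrack {m : P.Mem} {v : V} (h : ¬ P.OnTrack m v) :
    P.up m v = .inr (.inr (P.blame m)) ∧ P.nxt m v = P.pun (P.blame m) v := by
  simp [up, nxt, h]

theorem onLasso_of_onTrack {m : P.Mem} {v : V} (h : P.OnTrack m v) :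
    (∃ ℓ ≤ P.a, P.pv ℓ = v) ∨ ∃ q, P.cv q = v := by
  rcases m with ℓ | ⟨k, j⟩ | i
  · exact .inl ⟨ℓ, by omega, (h : v = _).symm⟩
  · rcases h with h | ⟨q, -, -, hq⟩
    exacts [.inr ⟨_, h.symm⟩, .inr ⟨q, hq⟩]
  · exact h.elim

noncomputable def strategy : A.Strategy :=
  ⟨fun h v => P.nxt (h.foldl P.up (.inl 0)) v, fun _ _ => P.nxt_edge _ _⟩

noncomputable def profile : Fin n → A.Strategy := fun _ => P.strategy

theorem hasMemorySize_strategy : HasMemorySize P.strategy (P.a + 1 + n ^ 2 + n) := by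
  refine ⟨P.Mem, ⟨.inl 0, P.up, P.nxt, P.nxt_edge⟩, inferInstance, ?_, fun _ _ => rfl⟩
  simp [sq, add_assoc]

theorem add_one_le_card [Finite V] : P.a + 1 ≤ Nat.card V := by
  have hinj : Function.Injective fun q : Fin (P.a + 1) => P.pv q :=
    fun q q' h => Fin.ext (P.pv_injOn (Set.mem_Iic.2 (by omega)) (Set.mem_Iic.2 (by omega)) h)
  simpa using Nat.card_le_card_of_injective _ hinj

variable (ξ : ℕ → V)

noncomputable def state (t : ℕ) : P.Mem := (pref ξ t).foldl P.up (.inl 0)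

theorem state_succ (t : ℕ) : P.state ξ (t + 1) = P.up (P.state ξ t) (ξ t) := by
  simp [state, pref_succ]

variable {P ξ}

theorem onTrack_zero (h0 : ξ 0 = v0) : P.OnTrack (P.state ξ 0) (ξ 0) := by
  simp [state, pref, OnTrack, h0, P.pv_zero]

theorem state_punish_of_le {s : ℕ} {i : Fin n} (h : P.state ξ s = .inr (.inr i)) :
    ∀ u ≥ s, P.state ξ u = .inr (.inr i) := by
  refine Nat.le_induction h fun u _ ih => ?_
  rw [state_succ, ih, (P.up_of_not_onTrack id).1]
  rfl

theorem state_prefix {t : ℕ} (hon : ∀ u < t, P.OnTrack (P.state ξ u) (ξ u)) (ht : t ≤ P.a) :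
    P.state ξ t = .inl ⟨t, by omega⟩ := by
  induction t with
  | zero => simp [state, pref]
  | succ t ih =>
    have hprev := ih (fun u hu => hon u (by omega)) (by omega)
    have hon' := hon t (by omega)
    rw [hprev] at hon'
    rw [state_succ, hprev, up, if_pos hon', advance, dif_pos (show t < P.a by omega)]

theorem state_window {t : ℕ} (hon : ∀ u < t, P.OnTrack (P.state ξ u) (ξ u)) (ht : P.a < t) :
    ∃ k j, P.state ξ t = .inr (.inl (k, j)) := by
  induction t, ht using Nat.le_induction with
  | base =>
    have hprev := state_prefix (fun u hu => hon u (by omega)) le_rfl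
    have hon' := hon P.a (by omega)
    rw [hprev] at hon'
    rw [state_succ, hprev, up, if_pos hon', advance, dif_neg (lt_irrefl _)]
    exact ⟨_, _, rfl⟩
  | succ t ht ih =>
    obtain ⟨k, j, hkj⟩ := ih fun u hu => hon u (by omega)
    have hon' := hon t (by omega)
    rw [hkj] at hon'
    rw [state_succ, hkj, up, if_pos hon', advance]
    exact ⟨_, _, rfl⟩

theorem not_mem_buchiObj_of_onTrack (hon : ∀ t, P.OnTrack (P.state ξ t) (ξ t)) {i : Fin n}
    (hi : i ∉ S) : ξ ∉ BuchiObj (T i) := by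
  intro hB
  obtain ⟨t, ht, hT⟩ := hB (P.a + 1)
  obtain ⟨k, j, hkj⟩ := state_window (fun u _ => hon u) (show P.a < t by omega)
  have hon' := hon t
  rw [hkj] at hon'
  rcases hon' with h | ⟨q, -, -, h⟩
  · exact P.cv_not_mem i hi _ (h ▸ hT)
  · exact P.cv_not_mem i hi q (h ▸ hT)

/-- The deviator is the owner of the last vertex on track, whom the machine blames. -/
theorem punish_of_leave_track {t : ℕ} {i : Fin n} (hp : A.IsPlay ξ)
    (hf : ∀ t, A.owner (ξ t) ≠ i → ξ (t + 1) = P.nxt (P.state ξ t) (ξ t)) (hi : i ∉ S)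
    (hon : P.OnTrack (P.state ξ t) (ξ t)) (hoff : ¬ P.OnTrack (P.state ξ (t + 1)) (ξ (t + 1))) :
    ξ (t + 1) ∈ P.W i ∧
      ∀ r, A.owner (ξ (t + 1 + r)) ≠ i → ξ (t + 1 + r + 1) = P.pun i (ξ (t + 1 + r)) := by
  have hown : A.owner (ξ t) = i := by
    by_contra ho
    have h := P.onTrack_up_nxt hon
    rw [← state_succ, ← hf t ho] at h
    exact hoff h
  have hblame : P.blame (P.state ξ (t + 1)) = i := by
    rw [state_succ, P.blame_up hon, hown]
  have hpun : P.state ξ (t + 2) = .inr (.inr i) := by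
    rw [state_succ, (P.up_of_not_onTrack hoff).1, hblame]
  refine ⟨P.mem_W i hi _ _ (P.onLasso_of_onTrack hon) hown (hp t), fun r hr => ?_⟩
  rw [hf _ hr]
  cases r with
  | zero => rw [add_zero, (P.up_of_not_onTrack hoff).2, hblame]
  | succ r => rw [state_punish_of_le hpun _ (by omega)]; exact (P.up_of_not_onTrack id).2

theorem not_mem_buchiObj_of_deviation {i : Fin n} (hi : i ∉ S) (h0 : ξ 0 = v0)
    (hp : A.IsPlay ξ) (hf : ∀ t, A.owner (ξ t) ≠ i → ξ (t + 1) = P.nxt (P.state ξ t) (ξ t)) :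
    ξ ∉ BuchiObj (T i) := by
  by_cases hon : ∀ t, P.OnTrack (P.state ξ t) (ξ t)
  · exact not_mem_buchiObj_of_onTrack hon hi
  have hex : ∃ s, ¬ P.OnTrack (P.state ξ s) (ξ s) := by simpa using hon
  obtain ⟨t, ht⟩ : ∃ t, Nat.find hex = t + 1 :=
    Nat.exists_eq_add_one_of_ne_zero fun h => (h ▸ Nat.find_spec hex) (onTrack_zero h0)
  have hoff : ¬ P.OnTrack (P.state ξ (t + 1)) (ξ (t + 1)) := ht ▸ Nat.find_spec hex
  have hon_t : P.OnTrack (P.state ξ t) (ξ t) := not_not.mp (Nat.find_min hex (by omega))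
  obtain ⟨hW, hpun⟩ := punish_of_leave_track hp hf hi hon_t hoff
  obtain ⟨N, hN⟩ := P.pun_sound i hi (fun r => ξ (t + 1 + r)) (fun r => hp _) hW hpun
  intro hB
  obtain ⟨k, hk, hkT⟩ := hB (t + 1 + N)
  exact hN (k - (t + 1)) (by omega) (by rwa [show t + 1 + (k - (t + 1)) = k by omega])

variable (P)

noncomputable def play : ℕ → V := outcome A P.profile v0

theorem play_succ (t : ℕ) : P.play (t + 1) = P.nxt (P.state P.play t) (P.play t) :=
  outcome_succ A P.profile v0 t

theorem onTrack_play (t : ℕ) : P.OnTrack (P.state P.play t) (P.play t) := by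
  induction t with
  | zero => exact onTrack_zero rfl
  | succ t ih => rw [play_succ, state_succ]; exact P.onTrack_up_nxt ih

def AtWindow (t : ℕ) (k : Fin n) (q : ℕ) : Prop :=
  (∃ j, P.state P.play t = .inr (.inl (k, j))) ∧ P.play t = P.cv q ∧ P.c k ≤ q ∧ q ≤ P.c (k + 1)

variable {P}

theorem atWindow_succ_of_end {t : ℕ} {k : Fin n} {q : ℕ} (h : P.AtWindow t k q)
    (hend : P.play t = P.cv (P.c (k + 1))) :
    P.AtWindow (t + 1) (nextWindow k) (P.c (nextWindow k) + 1) := by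
  obtain ⟨⟨j, hj⟩, -, -, -⟩ := h
  have hon : P.OnTrack (P.state P.play t) (P.play t) := hj ▸ .inl hend
  refine ⟨⟨A.owner (P.play t), ?_⟩, ?_, by omega, P.c_lt_c_succ _⟩
  · rw [state_succ, up, if_pos hon, hj, advance, if_pos hend]
  · rw [play_succ, nxt, if_pos hon, hj, follow, if_pos hend]

theorem atWindow_succ_of_ne_end {t : ℕ} {k : Fin n} {q : ℕ} (h : P.AtWindow t k q)
    (hend : P.play t ≠ P.cv (P.c (k + 1))) : ∃ q' > q, P.AtWindow (t + 1) k q' := by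
  obtain ⟨⟨j, hj⟩, hq, hq1, hq2⟩ := h
  have hlt : q < P.c (k + 1) := lt_of_le_of_ne hq2 fun h => hend (h ▸ hq)
  have hw : P.InWindow k (P.play t) := ⟨q, hq1, hlt, hq.symm⟩
  have hon : P.OnTrack (P.state P.play t) (P.play t) := hj ▸ .inr hw
  obtain ⟨-, hlast, -, hmax⟩ := P.lastPos_spec hw
  have hqle := hmax q hq1 hlt hq.symm
  refine ⟨P.lastPos k (P.play t) + 1, by omega, ⟨A.owner (P.play t), ?_⟩, ?_, by omega, hlast⟩
  · rw [state_succ, up, if_pos hon, hj, advance, if_neg hend]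
  · rw [play_succ, nxt, if_pos hon, hj, follow, if_neg hend]

theorem exists_atWindow_end {t : ℕ} {k : Fin n} {q : ℕ} (h : P.AtWindow t k q) :
    ∃ t' ≥ t, P.play t' = P.cv (P.c (k + 1)) ∧
      P.AtWindow (t' + 1) (nextWindow k) (P.c (nextWindow k) + 1) := by
  induction hd : P.c (k + 1) - q using Nat.strong_induction_on generalizing t q with
  | _ d ih =>
    by_cases hend : P.play t = P.cv (P.c (k + 1))
    · exact ⟨t, le_rfl, hend, atWindow_succ_of_end h hend⟩
    · obtain ⟨q', hq', h'⟩ := atWindow_succ_of_ne_end h hend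
      obtain ⟨t', ht', hrest⟩ := ih _ (by have := h'.2.2.2; omega) h' rfl
      exact ⟨t', by omega, hrest⟩

theorem exists_play_eq_iterate {t : ℕ} {k : Fin n} {q : ℕ} (h : P.AtWindow t k q) (m : ℕ) :
    ∃ t' ≥ t, P.play t' = P.cv (P.c (nextWindow^[m + 1] k)) := by
  induction m generalizing t k q with
  | zero =>
    obtain ⟨t', ht', hend, -⟩ := exists_atWindow_end h
    exact ⟨t', ht', hend.trans (P.cv_c_succ k)⟩
  | succ m ih =>
    obtain ⟨t', ht', -, h'⟩ := exists_atWindow_end h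
    obtain ⟨t'', ht'', hv⟩ := ih h'
    exact ⟨t'', by omega, by rwa [Function.iterate_succ_apply]⟩

theorem exists_atWindow {t : ℕ} (ht : P.a < t) : ∃ k q, P.AtWindow t k q := by
  obtain ⟨k, j, hkj⟩ := state_window (fun u _ => P.onTrack_play u) ht
  have hon := P.onTrack_play t
  rw [hkj] at hon
  rcases hon with h | ⟨q, hq1, hq2, hq⟩
  · exact ⟨k, _, ⟨j, hkj⟩, h, (P.c_lt_c_succ k).le, le_rfl⟩
  · exact ⟨k, q, ⟨j, hkj⟩, hq.symm, hq1, hq2.le⟩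

theorem exists_ge_play_eq (k' : Fin n) (t₀ : ℕ) : ∃ t ≥ t₀, P.play t = P.cv (P.c k') := by
  obtain ⟨k, q, h⟩ := exists_atWindow (show P.a < max t₀ (P.a + 1) by omega)
  obtain ⟨t, ht, hv⟩ := exists_play_eq_iterate h (k' + n - (k + 1))
  have hk' : nextWindow^[k' + n - (k + 1) + 1] k = k' := by
    ext
    rw [val_iterate_nextWindow, show k.val + (k' + n - (k + 1) + 1) = k' + n by omega,
      Nat.add_mod_right, Nat.mod_eq_of_lt k'.isLt]
  exact ⟨t, by omega, hk' ▸ hv⟩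

variable (P)

theorem satBuchi_play : satBuchi T P.play = S := by
  ext i
  refine ⟨fun hi => by_contra fun hiS => not_mem_buchiObj_of_onTrack P.onTrack_play hiS hi,
    fun hi j => ?_⟩
  obtain ⟨t, ht, hv⟩ := exists_ge_play_eq i j
  exact ⟨t, ht, hv ▸ P.cv_mem i hi⟩

theorem isNEObj_profile : A.IsNEObj (fun i => BuchiObj (T i)) P.profile v0 := by
  intro i τ hdev
  by_contra hi
  have hiS : i ∉ S := by rw [← P.satBuchi_play]; exact hi
  refine not_mem_buchiObj_of_deviation (P := P) hiS rfl (isPlay_outcome A _ v0)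
    (fun t ht => ?_) hdev
  rw [outcome_succ, Function.update_of_ne ht]
  rfl

end LassoPlan

theorem exists_forall_ge_not_mem (T : Fin n → Set V) (π : ℕ → V) :
    ∃ J, ∀ i ∉ satBuchi T π, ∀ k ≥ J, π k ∉ T i := by
  have h : ∀ᶠ k in Filter.atTop, ∀ i, i ∉ satBuchi T π → π k ∉ T i := by
    refine Filter.eventually_all.2 fun i => ?_
    by_cases hi : i ∈ satBuchi T π
    · exact Filter.Eventually.of_forall fun _ h => absurd hi h
    · simp only [satBuchi, Set.mem_ofPred_eq, not_forall, not_exists, not_and] at hi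
      obtain ⟨j, hj⟩ := hi
      exact Filter.eventually_atTop.2 ⟨j, fun k hk _ => hj k hk⟩
  obtain ⟨J, hJ⟩ := Filter.eventually_atTop.1 h
  exact ⟨J, fun i hi k hk => hJ k hk i hi⟩

theorem exists_cycle_positions (T : Fin n → Set V) (π : ℕ → V)
    (hinf : ∃ v, ∀ j, ∃ k, j ≤ k ∧ π k = v) :
    ∃ (a' b' : ℕ) (d : ℕ → ℕ), StrictMono d ∧ a' < d 0 ∧ d n ≤ b' ∧ π b' = π a' ∧
      (∀ i ∈ satBuchi T π, π (d i) ∈ T i) ∧ ∀ i ∉ satBuchi T π, ∀ k ≥ a', π k ∉ T i := by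
  obtain ⟨v, hv⟩ := hinf
  obtain ⟨J, hJ⟩ := exists_forall_ge_not_mem T π
  obtain ⟨a', ha'J, ha'⟩ := hv J
  let P : ℕ → ℕ → Prop := fun k t => ∀ h : k < n, ⟨k, h⟩ ∈ satBuchi T π → π t ∈ T ⟨k, h⟩
  have hP : ∀ k, ∃ᶠ t in Filter.atTop, P k t := fun k => Filter.frequently_atTop.2 fun j => by
    by_cases hk : ∃ h : k < n, ⟨k, h⟩ ∈ satBuchi T π
    · obtain ⟨h, hS⟩ := hk
      obtain ⟨t, ht, hT⟩ := hS j
      exact ⟨t, ht, fun _ _ => hT⟩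
    · exact ⟨j, le_rfl, fun h hS => absurd ⟨h, hS⟩ hk⟩
  obtain ⟨d, hd, had, hdT⟩ := exists_strictMono_of_frequently P hP a'
  obtain ⟨b', hb', hb'v⟩ := hv (d n)
  exact ⟨a', b', d, hd, had, hb', hb'v.trans ha'.symm, fun i hi => hdT i i.isLt hi,
    fun i hi k hk => hJ i hi k (by omega)⟩

/-- The cycle is the segment of the equilibrium outcome between `a'` and `b'`, rotated to start
at `d 0`; the prefix is its initial segment up to `d 0` with the loops cut out. -/
theorem nonempty_lassoPlan {A : Arena V n} {T : Fin n → Set V} {v0 : V}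
    {σ : Fin n → A.Strategy} (hNE : A.IsNEObj (fun i => BuchiObj (T i)) σ v0)
    (hinf : ∃ v, ∀ j, ∃ k, j ≤ k ∧ outcome A σ v0 k = v) :
    Nonempty (LassoPlan A T (satBuchi T (outcome A σ v0)) v0) := by
  set π := outcome A σ v0
  have hn : 0 < n := (A.owner v0).pos
  obtain ⟨a', b', d, hd, had, hdn, hab, hwin, hlose⟩ := exists_cycle_positions T π hinf
  have hda : ∀ k, a' < d k := fun k => had.trans_le (hd.monotone (Nat.zero_le k))
  have hdb : ∀ k < n, d k < b' := fun k hk => (hd hk).trans_le hdn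
  obtain ⟨a, pv, hpv0, hpva, hpv, hpvπ, hinj⟩ :=
    exists_injOn_walk A.E (d 0) π fun q _ => isPlay_outcome A σ v0 q
  set L := b' - a' with hLdef
  have hL : 0 < L := by have := hdb 0 hn; omega
  let cv : ℕ → V := fun q => π (a' + q % L)
  let c : ℕ → ℕ := fun k => if k < n then d k - a' else L + (d 0 - a')
  have hcd : ∀ k < n, cv (c k) = π (d k) := fun k hk => by
    simp only [cv, c, if_pos hk, Nat.mod_eq_of_lt (show d k - a' < L by have := hdb k hk; omega),
      show a' + (d k - a') = d k by have := hda k; omega]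
  have hπv : ∀ v, ((∃ ℓ ≤ a, pv ℓ = v) ∨ ∃ q, cv q = v) → ∃ m, π m = v := by
    rintro v (⟨ℓ, hℓ, rfl⟩ | ⟨q, rfl⟩)
    · exact (hpvπ ℓ hℓ).imp fun _ h => h.symm
    · exact ⟨_, rfl⟩
  refine ⟨{
    a := a
    pv := pv
    cv := cv
    c := c
    pun := fun i => Punish.punisher A i (T i)
    W := fun i => Punish.region A i (T i)
    pv_zero := hpv0
    pv_edge := hpv
    pv_a := hpva.trans (hcd 0 hn).symm
    pv_injOn := hinj
    cv_edge := (isPlay_outcome A σ v0).comp_mod hL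
      (by rw [show a' + L = b' by omega]; exact hab)
    cv_wrap := ?_
    c_lt := ?_
    cv_mem := fun i hi => hcd i i.isLt ▸ hwin i hi
    cv_not_mem := fun i hi q => hlose i hi _ (Nat.le_add_right _ _)
    pun_edge := fun i v => A.select_edge _ v
    pun_sound := fun i _ χ hp h0 hf => Punish.punisher_sound χ hp h0 hf
    mem_W := fun i hi v u hv hown hE => ?_ }⟩
  · simp only [cv, c, lt_irrefl, if_false, if_pos hn, Nat.add_mod_left]
  · intro k hk
    have := hda k
    have := hdb k hk
    by_cases hk' : k + 1 < n
    · simp only [c, if_pos hk, if_pos hk']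
      have := hd (show k < k + 1 by omega)
      have := hda (k + 1)
      omega
    · simp only [c, if_pos hk, if_neg hk']
      omega
  · obtain ⟨m, rfl⟩ := hπv v hv
    exact mem_region_of_isNEObj hNE hi hown hE

end Arena

/-- From any NE in a Büchi game whose outcome has an infinitely
occurring vertex, one can derive a finite-memory NE with the same set of
satisfied objectives; with memory size at most `|V| + n² + n` if the arena
is finite. -/
theorem buchi_fm_ne_lasso
    (V : Type) (n : ℕ) (A : Arena V n) (T : Fin n → Set V) (v0 : V)
    (σ' : Fin n → A.Strategy)
    (hNE : A.IsNEObj (fun i => BuchiObj (T i)) σ' v0)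
    (hinf : ∃ v, ∀ j, ∃ k, j ≤ k ∧ outcome A σ' v0 k = v) :
    (∃ σ : Fin n → A.Strategy,
      A.IsNEObj (fun i => BuchiObj (T i)) σ v0 ∧
      satBuchi T (outcome A σ v0) = satBuchi T (outcome A σ' v0) ∧
      ∀ i, FiniteMemory (σ i)) ∧
    (Finite V →
      ∃ σ : Fin n → A.Strategy,
        A.IsNEObj (fun i => BuchiObj (T i)) σ v0 ∧
        satBuchi T (outcome A σ v0) = satBuchi T (outcome A σ' v0) ∧
        ∀ i, HasMemorySize (σ i) (Nat.card V + n ^ 2 + n)) := by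
  obtain ⟨P⟩ := nonempty_lassoPlan hNE hinf
  refine ⟨⟨P.profile, P.isNEObj_profile, P.satBuchi_play,
      fun _ => P.hasMemorySize_strategy.finiteMemory⟩,
    fun _ => ⟨P.profile, P.isNEObj_profile, P.satBuchi_play,
      fun _ => P.hasMemorySize_strategy.mono ?_⟩⟩
  have := P.add_one_le_card
  omega
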